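/- Let N be a Nijenhuis operator on a left pre-Jacobi-Jordan algebra (A,·). Then the deformed product x·_N y := N(x)·y + x·N(y) − N(x·y) makes A a left pre-Jacobi-Jordan algebra, and N is a morphism from (A,·_N) to (A,·). -/
import Mathlib


def IsLeftPreJJFun {A : Type*} [AddCommGroup A] (m : A → A → A) : Prop :=
  ∀ x y z : A, m (m x y) z + m x (m y z) + m (m y x) z + m y (m x z) = 0

/-- `N` is a Nijenhuis operator on `(A, m)`. -/
def IsNijenhuis {K A : Type*} [Field K] [AddCommGroup A] [Module K A]
    (m : A →ₗ[K] A →ₗ[K] A) (N : A →ₗ[K] A) : Prop :=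
  ∀ x y : A, m (N x) (N y) = N (m (N x) y + m x (N y) - N (m x y))

theorem nijenhuis_deformed_product {K A : Type*} [Field K] [AddCommGroup A] [Module K A]
    (m : A →ₗ[K] A →ₗ[K] A) (h : IsLeftPreJJFun fun x y => m x y)
    (N : A →ₗ[K] A) (hN : IsNijenhuis m N) :
    IsLeftPreJJFun (fun x y => m (N x) y + m x (N y) - N (m x y)) ∧
      ∀ x y : A, N (m (N x) y + m x (N y) - N (m x y)) = m (N x) (N y) := by
  constructor
  · intro x y z
    simp only at h ⊢
    -- Nijenhuis identities
    have e1 := hN x y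
    have e2 := hN y x
    have e3 := hN x (m y z)
    have e4 := hN y (m x z)
    have e5 := hN (m x y) z
    have e6 := hN (m y x) z
    -- pre-JJ identities
    have h1 := h (N x) (N y) z
    have h2 := h (N x) y (N z)
    have h3 := h (N y) x (N z)
    have h4 := congrArg N (h x y (N z))
    have h5 := congrArg N (h (N x) y z)
    have h6 := congrArg N (h x (N y) z)
    have h7 := congrArg N (congrArg N (h x y z))
    have e1' := congrArg (fun t => m t z) e1
    have e2' := congrArg (fun t => m t z) e2
    have e7' := congrArg (fun t => m x t) (hN y z)
    have e8' := congrArg (fun t => m y t) (hN x z)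
    simp only [map_add, map_sub, map_zero, LinearMap.add_apply, LinearMap.sub_apply]
      at e1' e2' e7' e8' e3 e4 e5 e6 h4 h5 h6 h7 ⊢
    linear_combination (norm := module) h1 + h2 + h3 - h4 - h5 - h6 + h7 - e1' - e2' - e3 - e4 - e5 - e6 - e7' - e8'
  · intro x y
    exact (hN x y).symm
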